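/- arXiv:math/0307267 — 10 statements merged into one kernel-verified Lean document; each statement's English description precedes it below -/
import Mathlib

section
/- If X ∈ J satisfies X∘X = X, tr X = 1, and Y ∈ J satisfies X∘Y = ½Y, then det Y = 0. -/
/-- Abstract data of a (27-dimensional exceptional) Jordan algebra:
a commutative real algebra with unit `E`, a linear trace form `tr` with
`tr E = 3`, whose trace form `(X,Y) = tr (X ∘ Y)` is associative. -/
structure JordanData (J : Type) [AddCommGroup J] [Module ℝ J] where
  mul : J →ₗ[ℝ] J →ₗ[ℝ] J
  comm : ∀ x y : J, mul x y = mul y x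
  E : J
  one_mul : ∀ x : J, mul E x = x
  tr : J →ₗ[ℝ] ℝ
  trE : tr E = 3
  assoc : ∀ x y z : J, tr (mul (mul x y) z) = tr (mul x (mul y z))

namespace JordanData

noncomputable section

variable {J : Type} [AddCommGroup J] [Module ℝ J] (D : JordanData J)

/-- The trace bilinear form `(X,Y) = tr (X ∘ Y)`. -/
def inner (x y : J) : ℝ := D.tr (D.mul x y)

/-- The Freudenthal product
`X×Y = ½{2X∘Y − (tr X)Y − (tr Y)X + (tr X·tr Y − tr(X∘Y))E}`. -/
def cross (x y : J) : J :=
  (1 / 2 : ℝ) • ((2 : ℝ) • D.mul x y - D.tr x • y - D.tr y • x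
    + (D.tr x * D.tr y - D.tr (D.mul x y)) • D.E)

/-- `det X = ⅓ tr (X ∘ (X × X))`. -/
def det (x : J) : ℝ := (1 / 3 : ℝ) * D.tr (D.mul x (D.cross x x))

/-- The Cayley–Hamilton identity `X∘(X×X) = det X · E`. -/
def CayleyHamilton : Prop := ∀ x : J, D.mul x (D.cross x x) = D.det x • D.E

/-- The adjoint identity `(X×X)×(X×X) = det X · X`. -/
def AdjointIdentity : Prop := ∀ x : J, D.cross (D.cross x x) (D.cross x x) = D.det x • x

/-! Complexification `J^ℂ = J ⊗ ℂ`, modelled as pairs `(a, b) = a⊗1 + b⊗√−1`. -/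

/-- Multiplication on the complexification. -/
def mulC (A B : J × J) : J × J :=
  (D.mul A.1 B.1 - D.mul A.2 B.2, D.mul A.1 B.2 + D.mul A.2 B.1)

/-- Scalar multiplication of a complex number on `J^ℂ`. -/
def smulC (z : ℂ) (A : J × J) : J × J :=
  (z.re • A.1 - z.im • A.2, z.im • A.1 + z.re • A.2)

/-- Complex conjugation on `J^ℂ`. -/
def conjC (A : J × J) : J × J := (A.1, -A.2)

/-- The complexified trace. -/
def trC (A : J × J) : ℂ := ⟨D.tr A.1, D.tr A.2⟩

/-- The unit of `J^ℂ`. -/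
def EC : J × J := (D.E, 0)

/-- The complexified Freudenthal product. -/
def crossC (A B : J × J) : J × J :=
  smulC (1 / 2 : ℂ) (smulC 2 (D.mulC A B) - smulC (D.trC A) B - smulC (D.trC B) A
    + smulC (D.trC A * D.trC B - D.trC (D.mulC A B)) D.EC)

/-- The complexified determinant. -/
def detC (A : J × J) : ℂ := (1 / 3 : ℂ) * D.trC (D.mulC A (crossC D A A))

/-- Cayley–Hamilton on the complexification. -/
def CayleyHamiltonC : Prop := ∀ A : J × J, D.mulC A (crossC D A A) = smulC (D.detC A) D.EC

/-- The map `τ(X,Y) = (‖Y‖²X − Y∘Y)⊗1 + (1/√2)‖Y‖Y⊗√−1`. -/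
def tau (X Y : J) : J × J :=
  (D.inner Y Y • X - D.mul Y Y, (Real.sqrt (D.inner Y Y) / Real.sqrt 2) • Y)

end

end JordanData


/-- If `X∘X = X`, `tr X = 1` and `X∘Y = ½Y`, then `det Y = 0`. -/
theorem stmt3 {J : Type} [AddCommGroup J] [Module ℝ J] (D : JordanData J)
    (hCH : D.CayleyHamilton)
    (X Y : J) (hX : D.mul X X = X) (htrX : D.tr X = 1)
    (hXY : D.mul X Y = (1 / 2 : ℝ) • Y) :
    D.det Y = 0 := by
  have hmulXE : D.mul X D.E = X := by rw [D.comm]; exact D.one_mul X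
  have h1 : D.tr (D.mul X (D.mul Y (D.cross Y Y))) = D.det Y := by
    rw [hCH Y, map_smul, map_smul, hmulXE, smul_eq_mul, htrX, mul_one]
  have h2 : D.tr (D.mul X (D.mul Y (D.cross Y Y))) = (3 / 2 : ℝ) * D.det Y := by
    rw [← D.assoc, hXY, map_smul, LinearMap.smul_apply, map_smul, smul_eq_mul]
    have : D.tr (D.mul Y (D.cross Y Y)) = 3 * D.det Y := by
      unfold JordanData.det; ring
    rw [this]; ring
  have := h1.symm.trans h2
  linarith
end

section
/- Let (X,Y) be a tangent vector to the Cayley projective plane, i.e. X∘X = X, tr X = 1, X∘Y = ½Y. Then Y∘(Y∘Y) = ½‖Y‖²Y, where ‖Y‖² = (Y,Y). -/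
/-- For `(X,Y)` tangent to the Cayley projective plane, `Y∘(Y∘Y) = ½‖Y‖²Y`. -/
theorem stmt4 {J : Type} [AddCommGroup J] [Module ℝ J] (D : JordanData J)
    (hCH : D.CayleyHamilton)
    (X Y : J) (hX : D.mul X X = X) (htrX : D.tr X = 1)
    (hXY : D.mul X Y = (1 / 2 : ℝ) • Y) :
    D.mul Y (D.mul Y Y) = ((1 / 2 : ℝ) * D.inner Y Y) • Y := by

  -- tr(X∘Y) = 0
  have hmXY : D.tr (D.mul X Y) = 0 := by
    have h2 : D.tr (D.mul X Y) = (1 / 2 : ℝ) * D.tr (D.mul X Y) := by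
      conv_lhs => rw [← hX]
      rw [D.assoc]
      simp [hXY]
    linarith
  -- tr Y = 0
  have htrY : D.tr Y = 0 := by
    have h1 : D.tr (D.mul X Y) = (1 / 2 : ℝ) * D.tr Y := by
      rw [hXY, map_smul, smul_eq_mul]
    rw [h1] at hmXY; linarith
  have hYE : D.mul Y D.E = Y := by rw [D.comm, D.one_mul]
  have hXE : D.mul X D.E = X := by rw [D.comm, D.one_mul]
  -- cross Y Y
  have hcross : D.cross Y Y = D.mul Y Y - ((1 / 2 : ℝ) * D.inner Y Y) • D.E := by
    rw [JordanData.cross, htrY, JordanData.inner]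
    module
  have key : D.mul Y (D.mul Y Y) - ((1 / 2 : ℝ) * D.inner Y Y) • Y = D.det Y • D.E := by
    have := hCH Y
    rw [hcross, map_sub, map_smul, hYE] at this
    exact this
  -- tr(Y∘(Y∘Y)) = 3 det Y
  have htrY3 : D.tr (D.mul Y (D.mul Y Y)) = 3 * D.det Y := by
    have : D.tr (D.mul Y (D.cross Y Y)) = D.tr (D.mul Y (D.mul Y Y)) := by
      rw [hcross, map_sub, map_smul, hYE, map_sub, map_smul, htrY]
      simp
    rw [JordanData.det, this] at *
    ring
  -- det Y = 0
  have hdet : D.det Y = 0 := by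
    have hA : D.tr (D.mul X (D.mul Y (D.mul Y Y))) = (3 / 2 : ℝ) * D.det Y := by
      rw [← D.assoc, hXY]
      have : D.mul ((1 / 2 : ℝ) • Y) (D.mul Y Y) = (1 / 2 : ℝ) • D.mul Y (D.mul Y Y) := by
        simp [LinearMap.map_smul₂]
      rw [this, map_smul, smul_eq_mul, htrY3]
      ring
    have hB : D.tr (D.mul X (D.mul Y (D.mul Y Y))) = D.det Y := by
      have hY3 : D.mul Y (D.mul Y Y)
          = ((1 / 2 : ℝ) * D.inner Y Y) • Y + D.det Y • D.E := by
        have := key; linear_combination (norm := module) this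
      rw [hY3, map_add, map_smul, map_smul, map_add, map_smul, map_smul, hXE,
        smul_eq_mul, smul_eq_mul, hmXY, htrX]
      ring
    rw [hA] at hB; linarith
  rw [hdet, zero_smul] at key
  linear_combination (norm := module) key
end

section
/- Let (X,Y) satisfy X∘X = X, tr X = 1, X∘Y = ½Y in J. Then det(X + Y) = 0 and det(X − Y) = 0, and consequently X∘(Y∘Y) = ½‖Y‖²X. -/
/-- For `(X,Y)` tangent to the Cayley projective plane, `det (X ± Y) = 0`, and
consequently `X∘(Y∘Y) = ½‖Y‖²X`. -/
theorem stmt5 {J : Type} [AddCommGroup J] [Module ℝ J] (D : JordanData J)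
    (hCH : D.CayleyHamilton)
    (X Y : J) (hX : D.mul X X = X) (htrX : D.tr X = 1)
    (hXY : D.mul X Y = (1 / 2 : ℝ) • Y) :
    D.det (X + Y) = 0 ∧ D.det (X - Y) = 0 ∧
      D.mul X (D.mul Y Y) = ((1 / 2 : ℝ) * D.inner Y Y) • X := by
  classical
  set n : ℝ := D.tr (D.mul Y Y) with hn
  set t : ℝ := D.tr (D.mul Y (D.mul Y Y)) with ht
  have hYX : D.mul Y X = (1 / 2 : ℝ) • Y := by rw [D.comm]; exact hXY
  have hXE : D.mul X D.E = X := by rw [D.comm]; exact D.one_mul X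
  have hYE : D.mul Y D.E = Y := by rw [D.comm]; exact D.one_mul Y
  -- tr Y = 0
  have htrY : D.tr Y = 0 := by
    have h := D.assoc X X Y
    rw [hX] at h
    simp only [hXY, map_smul, smul_eq_mul] at h
    linarith
  have htrXY0 : D.tr (D.mul X Y) = 0 := by
    rw [hXY, map_smul, smul_eq_mul, htrY]; ring
  -- tr (X ∘ Y²) = n / 2
  have htrXY2 : D.tr (D.mul X (D.mul Y Y)) = n / 2 := by
    rw [← D.assoc, hXY, map_smul, LinearMap.smul_apply, map_smul, smul_eq_mul, hn]
    ring
  -- products of sums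
  have hmulp : D.mul (X + Y) (X + Y) = X + Y + D.mul Y Y := by
    simp only [map_add, LinearMap.add_apply, hX, hXY, hYX]
    module
  have hmulm : D.mul (X - Y) (X - Y) = X - Y + D.mul Y Y := by
    simp only [map_sub, LinearMap.sub_apply, hX, hXY, hYX]
    module
  have htrp : D.tr (X + Y) = 1 := by rw [map_add, htrX, htrY]; ring
  have htrm : D.tr (X - Y) = 1 := by rw [map_sub, htrX, htrY]; ring
  have htrmulp : D.tr (D.mul (X + Y) (X + Y)) = 1 + n := by
    rw [hmulp, map_add, map_add, htrX, htrY, ← hn]; ring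
  have htrmulm : D.tr (D.mul (X - Y) (X - Y)) = 1 + n := by
    rw [hmulm, map_add, map_sub, htrX, htrY, ← hn]; ring
  -- cross products
  have hcp : D.cross (X + Y) (X + Y) = D.mul Y Y - (n / 2 : ℝ) • D.E := by
    rw [JordanData.cross, htrp, htrmulp, hmulp]
    match_scalars <;> ring
  have hcm : D.cross (X - Y) (X - Y) = D.mul Y Y - (n / 2 : ℝ) • D.E := by
    rw [JordanData.cross, htrm, htrmulm, hmulm]
    match_scalars <;> ring
  -- products with the cross terms
  have hmulcp : D.mul (X + Y) (D.cross (X + Y) (X + Y))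
      = D.mul X (D.mul Y Y) + D.mul Y (D.mul Y Y) - (n / 2 : ℝ) • X - (n / 2 : ℝ) • Y := by
    rw [hcp]
    simp only [map_add, map_sub, map_smul, LinearMap.add_apply, LinearMap.sub_apply,
      LinearMap.smul_apply, hXE, hYE]
    module
  have hmulcm : D.mul (X - Y) (D.cross (X - Y) (X - Y))
      = D.mul X (D.mul Y Y) - D.mul Y (D.mul Y Y) - (n / 2 : ℝ) • X + (n / 2 : ℝ) • Y := by
    rw [hcm]
    simp only [map_add, map_sub, map_smul, LinearMap.add_apply, LinearMap.sub_apply,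
      LinearMap.smul_apply, hXE, hYE]
    module
  -- determinants
  have hdp : D.det (X + Y) = t / 3 := by
    rw [JordanData.det, hmulcp, map_sub, map_sub, map_add, map_smul, map_smul,
      smul_eq_mul, smul_eq_mul, htrXY2, htrX, htrY, ← ht]
    ring
  have hdm : D.det (X - Y) = -(t / 3) := by
    rw [JordanData.det, hmulcm, map_add, map_sub, map_sub, map_smul, map_smul,
      smul_eq_mul, smul_eq_mul, htrXY2, htrX, htrY, ← ht]
    ring
  -- Cayley–Hamilton applied to X ± Y
  have eqp : D.mul X (D.mul Y Y) + D.mul Y (D.mul Y Y)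
      - (n / 2 : ℝ) • X - (n / 2 : ℝ) • Y = (t / 3 : ℝ) • D.E := by
    have h := hCH (X + Y); rw [hmulcp, hdp] at h; exact h
  have eqm : D.mul X (D.mul Y Y) - D.mul Y (D.mul Y Y)
      - (n / 2 : ℝ) • X + (n / 2 : ℝ) • Y = (-(t / 3) : ℝ) • D.E := by
    have h := hCH (X - Y); rw [hmulcm, hdm] at h; exact h
  -- consequences
  have hXY2 : D.mul X (D.mul Y Y) = (n / 2 : ℝ) • X := by
    linear_combination (norm := module) ((1:ℝ)/2) • eqp + ((1:ℝ)/2) • eqm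
  have hY3 : D.mul Y (D.mul Y Y) = (n / 2 : ℝ) • Y + (t / 3 : ℝ) • D.E := by
    linear_combination (norm := module) ((1:ℝ)/2) • eqp - ((1:ℝ)/2) • eqm
  -- t = 0
  have ht1 : D.tr (D.mul X (D.mul Y (D.mul Y Y))) = t / 2 := by
    rw [← D.assoc, hXY, map_smul, LinearMap.smul_apply, map_smul, smul_eq_mul, ← ht]
    ring
  have ht2 : D.tr (D.mul X (D.mul Y (D.mul Y Y))) = t / 3 := by
    rw [hY3]
    simp only [map_add, map_smul, hXE, hXY, smul_eq_mul, htrY, htrX]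
    ring
  have ht0 : t = 0 := by rw [ht1] at ht2; linarith
  refine ⟨by rw [hdp, ht0]; ring, by rw [hdm, ht0]; ring, ?_⟩
  rw [hXY2, JordanData.inner, ← hn]
  match_scalars; ring
end

section
/- Let (X,Y) satisfy X∘X = X, tr X = 1, X∘Y = ½Y in J. Then ‖Y∘Y‖² = ½‖Y‖⁴ and (Y∘Y)∘(Y∘Y) = ½‖Y‖²(Y∘Y). -/
section aux
variable {J : Type} [AddCommGroup J] [Module ℝ J] (D : JordanData J)

lemma cross_add2 (a b : J) : D.cross (a + b) (a + b)
    = D.cross a a + D.cross a b + D.cross b a + D.cross b b := by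
  unfold JordanData.cross
  simp only [map_add, LinearMap.add_apply]
  module

lemma cross_sub2 (a b : J) : D.cross (a - b) (a - b)
    = D.cross a a - D.cross a b - D.cross b a + D.cross b b := by
  unfold JordanData.cross
  simp only [map_sub, LinearMap.sub_apply]
  module

lemma mul_E (x : J) : D.mul x D.E = x := by rw [D.comm]; exact D.one_mul x

end aux

set_option maxHeartbeats 2000000 in
/-- For `(X,Y)` tangent to the Cayley projective plane,
`‖Y∘Y‖² = ½‖Y‖⁴` and `(Y∘Y)∘(Y∘Y) = ½‖Y‖²(Y∘Y)`. -/
theorem stmt6 {J : Type} [AddCommGroup J] [Module ℝ J] (D : JordanData J)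
    (hCH : D.CayleyHamilton) (hAdj : D.AdjointIdentity)
    (X Y : J) (hX : D.mul X X = X) (htrX : D.tr X = 1)
    (hXY : D.mul X Y = (1 / 2 : ℝ) • Y) :
    D.inner (D.mul Y Y) (D.mul Y Y) = (1 / 2 : ℝ) * (D.inner Y Y) ^ 2 ∧
      D.mul (D.mul Y Y) (D.mul Y Y) = ((1 / 2 : ℝ) * D.inner Y Y) • D.mul Y Y := by
  set W := D.mul Y Y with hW
  set n := D.tr W with hn
  set m := D.tr (D.mul W W) with hm
  -- tr Y = 0
  have htrY : D.tr Y = 0 := by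
    have h := D.assoc X X Y
    rw [hX, hXY] at h
    simp only [map_smul, LinearMap.smul_apply, smul_eq_mul] at h
    rw [hXY] at h
    simp only [map_smul, smul_eq_mul] at h
    linarith
  have htrXY : D.tr (D.mul X Y) = 0 := by rw [hXY]; simp [htrY]
  have htrXX : D.tr (D.mul X X) = 1 := by rw [hX, htrX]
  -- tr (X ∘ W) = n/2
  have htrXW : D.tr (D.mul X W) = n / 2 := by
    have h := D.assoc X Y Y
    rw [hXY] at h
    simp only [map_smul, LinearMap.smul_apply, smul_eq_mul] at h
    rw [← hW, ← hn] at h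
    linarith
  -- cross computations
  have hXX : D.cross X X = 0 := by
    unfold JordanData.cross
    rw [hX, htrX]
    module
  have hcXY : D.cross X Y = 0 := by
    unfold JordanData.cross
    rw [hXY, htrX, htrY]
    simp only [map_smul, smul_eq_mul, htrY]
    module
  have hcYX : D.cross Y X = 0 := by
    unfold JordanData.cross
    rw [D.comm Y X, hXY, htrX, htrY]
    simp only [map_smul, smul_eq_mul, htrY]
    module
  set A := D.cross Y Y with hAdef
  have hA : A = W - (n / 2) • D.E := by
    rw [hAdef]
    unfold JordanData.cross
    rw [htrY, ← hW, ← hn]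
    module
  -- mul X A = det(X+Y)/... via CH at X ± Y
  have hcP : D.cross (X + Y) (X + Y) = A := by
    rw [cross_add2, hXX, hcXY, hcYX, hAdef]; abel
  have hcM : D.cross (X - Y) (X - Y) = A := by
    rw [cross_sub2, hXX, hcXY, hcYX, hAdef]; abel
  have hmXE : D.mul X D.E = X := mul_E D X
  have htrXA : D.tr (D.mul X A) = 0 := by
    rw [hA]
    simp only [map_sub, map_smul, hmXE, LinearMap.sub_apply, LinearMap.smul_apply]
    rw [htrXW]
    simp [htrX]
  have hdP : D.det (X + Y) = D.det Y := by
    unfold JordanData.det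
    rw [hcP, ← hAdef]
    simp only [map_add, LinearMap.add_apply]
    rw [htrXA]
    ring_nf
  have hdM : D.det (X - Y) = - D.det Y := by
    unfold JordanData.det
    rw [hcM, ← hAdef]
    simp only [map_sub, LinearMap.sub_apply]
    rw [htrXA]
    ring_nf
  have hCHP := hCH (X + Y)
  have hCHM := hCH (X - Y)
  rw [hcP, hdP] at hCHP
  rw [hcM, hdM] at hCHM
  simp only [map_add, map_sub, LinearMap.add_apply, LinearMap.sub_apply] at hCHP hCHM
  have hXA : D.mul X A = 0 := by
    have := congrArg (fun z => (1 / 2 : ℝ) • z) (congrArg₂ (· + ·) hCHP hCHM)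
    simpa [smul_smul, smul_add, smul_sub, ← add_smul] using this
  -- X ∘ W = (n/2) • X
  have hXW : D.mul X W = (n / 2) • X := by
    have h : D.mul X A = D.mul X W - (n / 2) • X := by
      rw [hA]; simp [map_sub, map_smul, hmXE]
    rw [hXA] at h
    linear_combination (norm := module) -h
  -- tr (Y ∘ W) = 0, hence det Y = 0
  have htrYW : D.tr (D.mul Y W) = 0 := by
    have h1 := D.assoc X Y W
    have h2 := D.assoc X W Y
    rw [hXY] at h1
    rw [hXW] at h2
    simp only [map_smul, LinearMap.smul_apply, smul_eq_mul] at h1 h2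
    rw [hXY] at h2
    simp only [map_smul, smul_eq_mul, htrY] at h2
    rw [D.comm W Y] at h2
    linarith [h1, h2]
  have hdY : D.det Y = 0 := by
    unfold JordanData.det
    rw [← hAdef, hA]
    simp only [map_sub, map_smul, LinearMap.sub_apply, LinearMap.smul_apply, mul_E]
    rw [htrYW, htrY]
    simp
  -- adjoint identity at Y
  have hAdjY := hAdj Y
  rw [← hAdef, hdY, zero_smul] at hAdjY
  -- compute pieces of cross A A
  have htrA : D.tr A = -(n / 2) := by
    rw [hA]; simp [D.trE, ← hn]; ring
  have hmAA : D.mul A A = D.mul W W - n • W + ((n / 2) ^ 2) • D.E := by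
    rw [hA]
    simp only [map_sub, map_smul, LinearMap.sub_apply, LinearMap.smul_apply,
      mul_E, D.one_mul]
    module
  have htrAA : D.tr (D.mul A A) = m - (n / 2) ^ 2 := by
    rw [hmAA]
    simp only [map_add, map_sub, map_smul, smul_eq_mul, D.trE, ← hm, ← hn]
    ring
  have key : D.mul W W - (n / 2) • W + ((n / 2) ^ 2 - m / 2) • D.E = 0 := by
    have h := hAdjY
    unfold JordanData.cross at h
    rw [htrA, htrAA, hmAA, hA] at h
    linear_combination (norm := module) h
  have htrkey := congrArg D.tr key
  simp only [map_add, map_sub, map_smul, smul_eq_mul, D.trE, ← hm, ← hn, map_zero] at htrkey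
  have hmn : m = (1 / 2 : ℝ) * n ^ 2 := by nlinarith [htrkey]
  constructor
  · show D.tr (D.mul W W) = (1/2 : ℝ) * (D.tr W) ^ 2
    rw [← hm, ← hn]; exact hmn
  · have : D.mul W W = (n / 2) • W - ((n / 2) ^ 2 - m / 2) • D.E := by
      linear_combination (norm := module) key
    rw [this, hmn]
    show _ = ((1/2 : ℝ) * D.tr (D.mul Y Y)) • W
    rw [← hW, ← hn]
    module
end

section
/- Let a, b ∈ J with a∘a = b∘b, a∘b = 0, ‖a‖² = ‖b‖² = ½, tr a = tr b = 0. Then det a = det b = 0 and det(a+b) = det(a−b) = 0. -/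
/-- If `a∘a = b∘b`, `a∘b = 0`, `‖a‖² = ‖b‖² = ½`, `tr a = tr b = 0`, then
`det a = det b = 0` and `det (a ± b) = 0`. -/
theorem stmt10 {J : Type} [AddCommGroup J] [Module ℝ J] (D : JordanData J)
    (hCH : D.CayleyHamilton) (hAdj : D.AdjointIdentity)
    (a b : J) (hab : D.mul a a = D.mul b b) (hab0 : D.mul a b = 0)
    (hna : D.inner a a = 1 / 2) (hnb : D.inner b b = 1 / 2)
    (htra : D.tr a = 0) (htrb : D.tr b = 0) :
    D.det a = 0 ∧ D.det b = 0 ∧ D.det (a + b) = 0 ∧ D.det (a - b) = 0 := by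
  have hba : D.mul b a = 0 := by rw [D.comm]; exact hab0
  have hbb : D.mul b b = D.mul a a := hab.symm
  have hna' : D.tr (D.mul a a) = 1/2 := hna
  have hab0' : D.tr (D.mul a b) = 0 := by rw [hab0]; simp
  have hba' : D.tr (D.mul b a) = 0 := by rw [hba]; simp
  have haE : D.mul a D.E = a := by rw [D.comm]; exact D.one_mul a
  have hbE : D.mul b D.E = b := by rw [D.comm]; exact D.one_mul b
  -- squares of a+b and a-b coincide
  have h1 : D.mul (a+b) (a+b) = (2:ℝ) • D.mul a a := by
    simp only [map_add, LinearMap.add_apply, hab0, hba, hbb, two_smul]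
    abel
  have h2 : D.mul (a-b) (a-b) = (2:ℝ) • D.mul a a := by
    simp only [map_sub, LinearMap.sub_apply, hab0, hba, hbb, two_smul]
    abel
  have htp : D.tr (a+b) = 0 := by simp [map_add, htra, htrb]
  have htm : D.tr (a-b) = 0 := by simp [map_sub, htra, htrb]
  -- the crosses coincide
  have hc : D.cross (a+b) (a+b) = D.cross (a-b) (a-b) := by
    simp only [JordanData.cross, htp, htm, map_add, map_sub, LinearMap.add_apply,
      LinearMap.sub_apply, hab0, hba, hbb, hna', hab0', hba', htra, htrb]
    norm_num
  -- adjoint identity gives the key vector equation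
  have key : D.det (a+b) • (a+b) = D.det (a-b) • (a-b) := by
    have k1 := hAdj (a+b)
    have k2 := hAdj (a-b)
    rw [hc] at k1
    rw [k1] at k2
    exact k2
  -- pair with a and with b
  have e1 := congrArg (fun x => D.tr (D.mul a x)) key
  have e2 := congrArg (fun x => D.tr (D.mul b x)) key
  simp only [map_add, map_sub, map_smul, smul_eq_mul, hna', hab0', hba', hbb] at e1 e2
  -- compute determinants in terms of p := tr(a∘a∘a), q := tr(b∘a∘a)
  have hda : D.det a = (1/3) * D.tr (D.mul a (D.mul a a)) := by
    simp [JordanData.det, JordanData.cross, htra, haE, map_add, map_sub, map_smul, hna']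
  have hdb : D.det b = (1/3) * D.tr (D.mul b (D.mul a a)) := by
    simp [JordanData.det, JordanData.cross, htrb, hbE, hbb, map_add, map_sub, map_smul, hna']
  have hdp : D.det (a+b) = (1/3) * (2 * D.tr (D.mul a (D.mul a a))
      + 2 * D.tr (D.mul b (D.mul a a))) := by
    simp [JordanData.det, JordanData.cross, h1, htp, haE, hbE, htra, htrb, hab0, hba, hbb,
      map_add, map_sub, map_smul, map_zero, hna', hab0', hba', LinearMap.add_apply]
    ring
  have hdm : D.det (a-b) = (1/3) * (2 * D.tr (D.mul a (D.mul a a))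
      - 2 * D.tr (D.mul b (D.mul a a))) := by
    simp [JordanData.det, JordanData.cross, h2, htm, haE, hbE, htra, htrb, hab0, hba, hbb,
      map_add, map_sub, map_smul, map_zero, hna', hab0', hba', LinearMap.sub_apply]
    ring
  rw [hdp, hdm] at e1 e2
  refine ⟨?_, ?_, ?_, ?_⟩ <;> simp only [hda, hdb, hdp, hdm] <;> linarith
end

section
/- Let a, b ∈ J satisfy a∘a = b∘b, a∘b = 0, ‖a‖² = ‖b‖² = ½, tr a = tr b = 0, det a = det b = 0. Set X = a + 2a∘a and Y = √2·b. Then X∘X = X, tr X = 1, and X∘Y = ½Y. -/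
/-- If `a∘a = b∘b`, `a∘b = 0`, `‖a‖² = ‖b‖² = ½`, `tr a = tr b = 0`,
`det a = det b = 0`, then `X = a + 2a∘a` and `Y = √2·b` satisfy
`X∘X = X`, `tr X = 1` and `X∘Y = ½Y`. -/
theorem stmt11 {J : Type} [AddCommGroup J] [Module ℝ J] (D : JordanData J)
    (hCH : D.CayleyHamilton) (hAdj : D.AdjointIdentity)
    (a b : J) (hab : D.mul a a = D.mul b b) (hab0 : D.mul a b = 0)
    (hna : D.inner a a = 1 / 2) (hnb : D.inner b b = 1 / 2)
    (htra : D.tr a = 0) (htrb : D.tr b = 0)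
    (hdeta : D.det a = 0) (hdetb : D.det b = 0) :
    D.mul (a + (2 : ℝ) • D.mul a a) (a + (2 : ℝ) • D.mul a a)
        = a + (2 : ℝ) • D.mul a a ∧
      D.tr (a + (2 : ℝ) • D.mul a a) = 1 ∧
      D.mul (a + (2 : ℝ) • D.mul a a) (Real.sqrt 2 • b)
        = (1 / 2 : ℝ) • (Real.sqrt 2 • b) := by

  have hmulE : ∀ x : J, D.mul x D.E = x := fun x => by rw [D.comm]; exact D.one_mul x
  have hna' : D.tr (D.mul a a) = 1 / 2 := hna
  have hca : D.cross a a = D.mul a a - (1/4 : ℝ) • D.E := by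
    simp only [JordanData.cross, htra, hna', zero_smul, mul_zero, zero_mul, zero_sub, sub_zero]
    module
  have haaa : D.mul a (D.mul a a) = (1/4 : ℝ) • a := by
    have h := hCH a
    rw [hca, hdeta, zero_smul, map_sub, map_smul, hmulE, sub_eq_zero] at h
    exact h
  have hnb'' : D.tr (D.mul b b) = 1 / 2 := hnb
  have hcb : D.cross b b = D.mul b b - (1/4 : ℝ) • D.E := by
    simp only [JordanData.cross, htrb, hnb'', zero_smul, mul_zero, zero_mul, zero_sub, sub_zero]
    module
  have hbc : D.mul b (D.mul a a) = (1/4 : ℝ) • b := by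
    have h := hCH b
    rw [hcb, hdetb, zero_smul, map_sub, map_smul, hmulE, sub_eq_zero, ← hab] at h
    exact h
  have htrcc : D.tr (D.mul (D.mul a a) (D.mul a a)) = 1 / 8 := by
    rw [D.assoc, haaa]
    simp [hna']
    norm_num
  have hcc : D.mul (D.mul a a) (D.mul a a) = (1/4 : ℝ) • D.mul a a := by
    have h := hAdj a
    rw [hdeta, zero_smul, hca] at h
    simp only [JordanData.cross, map_sub, map_smul, LinearMap.sub_apply,
      LinearMap.smul_apply, hmulE, D.one_mul, D.trE, hna', htrcc, smul_eq_mul] at h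
    norm_num at h
    rw [← sub_eq_zero, ← h]
    module
  have hac : D.mul a (D.mul a a) = (1/4 : ℝ) • a := haaa
  refine ⟨?_, ?_, ?_⟩
  · simp only [map_add, map_smul, LinearMap.add_apply, LinearMap.smul_apply, hcc]
    rw [D.comm (D.mul a a) a, haaa]
    module
  · simp only [map_add, map_smul, htra, hna']
    norm_num
  · simp only [map_add, map_smul, LinearMap.add_apply, LinearMap.smul_apply, hab0]
    rw [D.comm (D.mul a a) b, hbc]
    module
end

section
/- The map τ: {(X,Y) ∈ J×J : X∘X = X, tr X = 1, X∘Y = ½Y, Y ≠ 0} → {A ∈ J^ℂ : A∘A = 0, A ≠ 0} given by τ(X,Y) = (‖Y‖²X − Y∘Y)⊗1 + (1/√2)‖Y‖Y⊗√−1 is a bijection, with inverse σ(A) = (X,Y) where X = (1/(2‖A‖))(A + Ā) + (A∘Ā)/‖A‖², Y = −(√−1/√2)‖A‖^{−1/2}(A − Ā). -/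
namespace JordanData

noncomputable section

variable {J : Type} [AddCommGroup J] [Module ℝ J] (D : JordanData J)

/-- The Hermitian norm `‖A‖ = ((a,a)+(b,b))^{1/2}` on `J^ℂ`. -/
def normC (A : J × J) : ℝ := Real.sqrt (D.inner A.1 A.1 + D.inner A.2 A.2)

/-- The first component of the inverse map:
`X = (1/(2‖A‖))(A + Ā) + (A∘Ā)/‖A‖²`. -/
def sigmaX (A : J × J) : J × J :=
  smulC (((1 / (2 * D.normC A) : ℝ) : ℂ)) (A + conjC A)
    + smulC (((1 / (D.normC A) ^ 2 : ℝ) : ℂ)) (D.mulC A (conjC A))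

/-- The second component of the inverse map:
`Y = −(√−1/√2)‖A‖^{−1/2}(A − Ā)`. -/
def sigmaY (A : J × J) : J × J :=
  smulC (-(Complex.I / ((Real.sqrt 2 * Real.sqrt (D.normC A) : ℝ) : ℂ)))
    (A - conjC A)

end

end JordanData

/-! The conditions `X ∘ X = X`, `tr X = 1`, `X ∘ Y = ½ Y` enter through Cayley–Hamilton at
`X + s Y`: the coefficients of `s` and `s²` must be multiples of `E`, which forces `tr Y = 0`
and `X ∘ Y² = ½‖Y‖² X`, hence `Y³ = ½‖Y‖² Y`; the adjoint identity then gives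
`Y⁴ = ½‖Y‖² Y²`. These relations make `τ(X,Y) = a + i b` satisfy `a² = b²`, `a ∘ b = 0`.
Conversely, if `A = a + i b` squares to zero, multiplying the complex Cayley–Hamilton identity
`½ (tr A)² A = det A · E` by `A` gives `(tr A)³ A = 0`, so `a` and `b` are traceless; then
`tr a³ = tr ((a ∘ b) ∘ b) = 0`, and Cayley–Hamilton yields the same cubic relations for `a`
and `b`, from which `σ(A)` is checked directly. -/

theorem Submodule.coeffs_mem_of_forall_cubic_mem {𝕜 M : Type*} [Field 𝕜] [CharZero 𝕜]
    [AddCommGroup M] [Module 𝕜 M] (P : Submodule 𝕜 M) {u v w : M}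
    (h : ∀ s : 𝕜, s • u + s ^ 2 • v + s ^ 3 • w ∈ P) : u ∈ P ∧ v ∈ P ∧ w ∈ P := by
  have h1 := h 1
  have h2 := h (-1)
  have h3 := h 2
  refine ⟨?_, ?_, ?_⟩
  · convert P.sub_mem (P.sub_mem h1 (P.smul_mem (1 / 3) h2)) (P.smul_mem (1 / 6) h3) using 1
    module
  · convert P.smul_mem (1 / 2) (P.add_mem h1 h2) using 1
    module
  · convert P.add_mem (P.sub_mem (P.smul_mem (-1 / 2) h1) (P.smul_mem (1 / 6) h2))
      (P.smul_mem (1 / 6) h3) using 1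
    module

namespace JordanData

variable {J : Type} [AddCommGroup J] [Module ℝ J] (D : JordanData J)

theorem mul_E (x : J) : D.mul x D.E = x := by rw [D.comm, D.one_mul]

theorem cayleyHamilton_expand (hCH : D.CayleyHamilton) (x : J) :
    D.mul x (D.mul x x) - D.tr x • D.mul x x
      + ((D.tr x * D.tr x - D.tr (D.mul x x)) / 2) • x = D.det x • D.E := by
  rw [← hCH x, cross]
  simp only [map_smul, map_add, map_sub, D.mul_E]
  module

theorem cube_of_tr_eq_zero (hCH : D.CayleyHamilton) {x : J} (h1 : D.tr x = 0)
    (h3 : D.tr (D.mul x (D.mul x x)) = 0) :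
    D.mul x (D.mul x x) = (D.tr (D.mul x x) / 2) • x := by
  have hCHx := D.cayleyHamilton_expand hCH x
  have hdet : D.det x = 0 := by
    have := congrArg D.tr hCHx
    simp only [map_add, map_sub, map_smul, smul_eq_mul, h1, h3, D.trE] at this
    linarith
  rw [hdet, zero_smul, h1, zero_smul, sub_zero] at hCHx
  linear_combination (norm := module) hCHx

theorem cross_self_of_tr_eq_zero {x : J} (h1 : D.tr x = 0) :
    D.cross x x = D.mul x x - (D.tr (D.mul x x) / 2) • D.E := by
  rw [cross, h1]
  module

theorem sq_mul_sq_of_cube (hAdj : D.AdjointIdentity) {x : J} (h1 : D.tr x = 0)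
    (h3 : D.mul x (D.mul x x) = (D.tr (D.mul x x) / 2) • x) :
    D.mul (D.mul x x) (D.mul x x) = (D.tr (D.mul x x) / 2) • D.mul x x := by
  have hdet : D.det x = 0 := by
    rw [det, D.cross_self_of_tr_eq_zero h1, map_sub, map_smul, D.mul_E, h3]
    simp
  have htr4 : D.tr (D.mul (D.mul x x) (D.mul x x)) = D.tr (D.mul x x) ^ 2 / 2 := by
    rw [D.assoc, h3, map_smul, map_smul, smul_eq_mul]
    ring
  have hadj := hAdj x
  rw [D.cross_self_of_tr_eq_zero h1, hdet, zero_smul, cross] at hadj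
  simp only [map_sub, map_smul, LinearMap.sub_apply, LinearMap.smul_apply, D.mul_E,
    D.one_mul, smul_eq_mul, D.trE, htr4] at hadj
  linear_combination (norm := module) hadj

theorem tr_mul_sq_of_mul_eq_half_smul {X Y : J} (hXY : D.mul X Y = (1 / 2 : ℝ) • Y) :
    D.tr (D.mul X (D.mul Y Y)) = D.tr (D.mul Y Y) / 2 := by
  rw [← D.assoc, hXY, map_smul, LinearMap.smul_apply, map_smul, smul_eq_mul]
  ring

theorem smulC_smulC (z w : ℂ) (A : J × J) : smulC z (smulC w A) = smulC (z * w) A := by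
  ext <;> simp only [smulC, Complex.mul_re, Complex.mul_im] <;> module

theorem one_smulC (A : J × J) : smulC 1 A = A := by
  ext <;> simp [smulC]

theorem smulC_zero (z : ℂ) : smulC z (0 : J × J) = 0 := by
  ext <;> simp [smulC]

theorem smulC_eq_zero {z : ℂ} {A : J × J} (h : smulC z A = 0) : z = 0 ∨ A = 0 := by
  refine or_iff_not_imp_left.mpr fun hz => ?_
  rw [← one_smulC A, ← inv_mul_cancel₀ hz, ← smulC_smulC, h, smulC_zero]

theorem mulC_smulC (z : ℂ) (A B : J × J) : D.mulC A (smulC z B) = smulC z (D.mulC A B) := by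
  ext <;> simp only [mulC, smulC, map_add, map_sub, map_smul] <;> module

theorem mulC_EC (A : J × J) : D.mulC A D.EC = A := by
  ext <;> simp [mulC, EC, D.mul_E]

theorem trC_smulC (z : ℂ) (A : J × J) : D.trC (smulC z A) = z * D.trC A := by
  apply Complex.ext <;> simp [trC, smulC, Complex.mul_re, Complex.mul_im]; ring

theorem mulC_self_eq_zero_iff {a b : J} :
    D.mulC (a, b) (a, b) = 0 ↔ D.mul a a = D.mul b b ∧ D.mul a b = 0 := by
  rw [mulC, Prod.mk_eq_zero, sub_eq_zero, D.comm b a, ← two_smul ℝ, smul_eq_zero,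
    or_iff_right two_ne_zero]

theorem mulC_crossC_self_of_mulC_self_eq_zero {A : J × J} (hA : D.mulC A A = 0) :
    D.mulC A (D.crossC A A) = smulC (D.trC A * D.trC A / 2) A := by
  obtain ⟨a, b⟩ := A
  obtain ⟨hbb, hab⟩ := D.mulC_self_eq_zero_iff.mp hA
  have hba : D.mul b a = 0 := by rw [D.comm, hab]
  ext <;> simp [crossC, mulC, smulC, trC, EC, hbb, hab, hba, D.mul_E, Complex.mul_re,
    Complex.mul_im] <;> module

theorem trC_eq_zero_of_mulC_self_eq_zero (hCHC : D.CayleyHamiltonC) {A : J × J}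
    (hA : D.mulC A A = 0) : D.trC A = 0 := by
  have hmul := D.mulC_crossC_self_of_mulC_self_eq_zero hA
  have hdet : D.detC A = D.trC A ^ 3 / 6 := by
    rw [detC, hmul, trC_smulC]
    ring
  have hCH := congrArg (D.mulC A) (hCHC A)
  rw [hmul, hdet, mulC_smulC, mulC_smulC, hA, smulC_zero, mulC_EC] at hCH
  rcases smulC_eq_zero hCH.symm with h | h
  · simpa using h
  · rw [h]
    exact Complex.ext (map_zero D.tr) (map_zero D.tr)

theorem normC_mk_of_mul_self_eq {a b : J} (h : D.mul a a = D.mul b b) :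
    D.normC (a, b) = √(2 * D.tr (D.mul a a)) := by
  rw [normC, inner, inner, ← h, two_mul]

theorem sigmaX_mk (a b : J) :
    D.sigmaX (a, b) = ((1 / D.normC (a, b)) • a
      + (1 / D.normC (a, b) ^ 2) • (D.mul a a + D.mul b b), 0) := by
  simp only [sigmaX, conjC, mulC, smulC, Complex.ofReal_re, Complex.ofReal_im, D.comm b a,
    map_neg]
  ext <;> simp only [Prod.fst_add, Prod.snd_add] <;> module

theorem sigmaY_mk (a b : J) :
    D.sigmaY (a, b) = ((2 / (√2 * √(D.normC (a, b)))) • b, 0) := by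
  simp only [sigmaY, conjC, smulC, Complex.neg_re, Complex.neg_im, Complex.div_ofReal_re,
    Complex.div_ofReal_im, Complex.I_re, Complex.I_im]
  ext <;> simp only [Prod.fst_sub, Prod.snd_sub] <;> module

section

variable {D} {X Y : J}

theorem cayleyHamilton_add_smul_mem_span (hCH : D.CayleyHamilton) (hX : D.mul X X = X)
    (hXtr : D.tr X = 1) (hXY : D.mul X Y = (1 / 2 : ℝ) • Y) (s : ℝ) :
    s • ((-(D.tr Y / 2)) • X)
      + s ^ 2 • (D.mul X (D.mul Y Y)
          + ((D.tr Y * D.tr Y - D.tr (D.mul Y Y)) / 2) • X - (D.tr Y / 2) • Y)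
      + s ^ 3 • (D.mul Y (D.mul Y Y) - D.tr Y • D.mul Y Y
          + ((D.tr Y * D.tr Y - D.tr (D.mul Y Y)) / 2) • Y) ∈ (ℝ ∙ D.E) := by
  have hYX : D.mul Y X = (1 / 2 : ℝ) • Y := by rw [D.comm, hXY]
  have hsq : D.mul (X + s • Y) (X + s • Y) = X + s • Y + s ^ 2 • D.mul Y Y := by
    simp only [map_add, map_smul, LinearMap.add_apply, LinearMap.smul_apply, hX, hXY, hYX]
    module
  have hcube : D.mul (X + s • Y) (X + s • Y + s ^ 2 • D.mul Y Y)
      = X + s • Y + s ^ 2 • (D.mul X (D.mul Y Y) + D.mul Y Y)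
        + s ^ 3 • D.mul Y (D.mul Y Y) := by
    simp only [map_add, map_smul, LinearMap.add_apply, LinearMap.smul_apply, hX, hXY, hYX]
    module
  have hCHs := D.cayleyHamilton_expand hCH (X + s • Y)
  rw [hsq, hcube] at hCHs
  simp only [map_add, map_smul, smul_eq_mul, hXtr] at hCHs
  refine Submodule.mem_span_singleton.mpr ⟨D.det (X + s • Y), ?_⟩
  linear_combination (norm := module) -hCHs

theorem eq_zero_of_smul_mem_span (hXtr : D.tr X = 1) (hXY : D.mul X Y = (1 / 2 : ℝ) • Y)
    (hY : Y ≠ 0) {c : ℝ} (h : c • X ∈ (ℝ ∙ D.E)) : c = 0 := by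
  obtain ⟨d, hd⟩ := Submodule.mem_span_singleton.mp h
  have htr := congrArg D.tr hd
  have hmul := congrArg (fun Z => D.mul Z Y) hd
  simp only [map_smul, smul_eq_mul, D.trE, hXtr, LinearMap.smul_apply, hXY, D.one_mul,
    smul_smul] at htr hmul
  have : (d - c * (1 / 2)) • Y = 0 := by rw [sub_smul, hmul, sub_self]
  have := (smul_eq_zero.mp this).resolve_right hY
  linarith

theorem tr_eq_zero_of_peirce (hCH : D.CayleyHamilton) (hX : D.mul X X = X) (hXtr : D.tr X = 1)
    (hXY : D.mul X Y = (1 / 2 : ℝ) • Y) (hY : Y ≠ 0) : D.tr Y = 0 := by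
  have hmem := (Submodule.coeffs_mem_of_forall_cubic_mem _
    (cayleyHamilton_add_smul_mem_span hCH hX hXtr hXY)).1
  linarith [eq_zero_of_smul_mem_span hXtr hXY hY hmem]

theorem mul_sq_of_peirce (hCH : D.CayleyHamilton) (hX : D.mul X X = X)
    (hXtr : D.tr X = 1) (hXY : D.mul X Y = (1 / 2 : ℝ) • Y) (hY : Y ≠ 0) :
    D.mul X (D.mul Y Y) = (D.tr (D.mul Y Y) / 2) • X := by
  have hmem := (Submodule.coeffs_mem_of_forall_cubic_mem _
    (cayleyHamilton_add_smul_mem_span hCH hX hXtr hXY)).2.1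
  obtain ⟨d, hd⟩ := Submodule.mem_span_singleton.mp hmem
  rw [tr_eq_zero_of_peirce hCH hX hXtr hXY hY] at hd
  have hd0 : d = 0 := by
    have := congrArg D.tr hd
    simp only [map_add, map_sub, map_smul, smul_eq_mul, D.trE, hXtr,
      D.tr_mul_sq_of_mul_eq_half_smul hXY] at this
    linarith
  rw [hd0, zero_smul] at hd
  linear_combination (norm := module) -hd

theorem cube_of_peirce (hCH : D.CayleyHamilton) (hX : D.mul X X = X)
    (hXtr : D.tr X = 1) (hXY : D.mul X Y = (1 / 2 : ℝ) • Y) (hY : Y ≠ 0) :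
    D.mul Y (D.mul Y Y) = (D.tr (D.mul Y Y) / 2) • Y := by
  have htrY := tr_eq_zero_of_peirce hCH hX hXtr hXY hY
  refine D.cube_of_tr_eq_zero hCH htrY ?_
  have h1 := D.assoc X Y (D.mul Y Y)
  have h2 := D.assoc X (D.mul Y Y) Y
  rw [D.comm (D.mul Y Y) Y, ← h1, hXY, mul_sq_of_peirce hCH hX hXtr hXY hY] at h2
  simp only [map_smul, LinearMap.smul_apply, smul_eq_mul, hXY, htrY] at h2
  linarith

theorem tau_spec (hCH : D.CayleyHamilton) (hAdj : D.AdjointIdentity)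
    (hpos : ∀ x : J, x ≠ 0 → 0 < D.inner x x)
    (hX : D.mul X X = X) (hXtr : D.tr X = 1) (hXY : D.mul X Y = (1 / 2 : ℝ) • Y) (hY : Y ≠ 0) :
    D.mulC (D.tau X Y) (D.tau X Y) = 0 ∧ D.tau X Y ≠ 0 ∧
      D.sigmaX (D.tau X Y) = (X, 0) ∧ D.sigmaY (D.tau X Y) = (Y, 0) := by
  have hXQ := mul_sq_of_peirce hCH hX hXtr hXY hY
  have hYQ := cube_of_peirce hCH hX hXtr hXY hY
  have hQQ := D.sq_mul_sq_of_cube hAdj (tr_eq_zero_of_peirce hCH hX hXtr hXY hY) hYQ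
  set Q := D.mul Y Y
  set n := D.tr Q
  have hn : 0 < n := hpos Y hY
  set c := √n / √2
  have hc : c * c = n / 2 := by
    rw [div_mul_div_comm, Real.mul_self_sqrt hn.le, Real.mul_self_sqrt zero_le_two]
  have htau : D.tau X Y = (n • X - Q, c • Y) := rfl
  have haa : D.mul (n • X - Q) (n • X - Q) = (n / 2) • Q := by
    simp only [map_sub, map_smul, LinearMap.sub_apply, LinearMap.smul_apply, hX, hXQ, hQQ,
      D.comm Q X]
    module
  have hbb : D.mul (c • Y) (c • Y) = (n / 2) • Q := by
    simp only [map_smul, LinearMap.smul_apply, smul_smul, hc, Q]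
  have hab : D.mul (n • X - Q) (c • Y) = 0 := by
    simp only [map_sub, map_smul, LinearMap.sub_apply, LinearMap.smul_apply, hXY, D.comm Q Y,
      hYQ]
    module
  have hnorm : D.normC (n • X - Q, c • Y) = n := by
    rw [D.normC_mk_of_mul_self_eq (haa.trans hbb.symm), haa, map_smul, smul_eq_mul]
    change √(2 * (n / 2 * n)) = n
    rw [show 2 * (n / 2 * n) = n ^ 2 by ring, Real.sqrt_sq hn.le]
  have hc0 : c ≠ 0 := by positivity
  rw [htau]
  refine ⟨D.mulC_self_eq_zero_iff.mpr ⟨haa.trans hbb.symm, hab⟩,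
    fun h => hY ((smul_eq_zero.mp (congrArg Prod.snd h)).resolve_left hc0), ?_, ?_⟩
  · rw [D.sigmaX_mk, hnorm, haa, hbb]
    ext
    · match_scalars <;> field_simp; ring
    · rfl
  · have hscale : 2 / (√2 * √n) * c = 1 := by
      simp only [c]
      field_simp
      exact (Real.sq_sqrt zero_le_two).symm
    rw [D.sigmaY_mk, hnorm, smul_smul, hscale, one_smul]

theorem sigma_spec_of_mul_relations {a b : J} (hsq : D.mul a a = D.mul b b)
    (hab : D.mul a b = 0) (hta : D.tr a = 0)
    (haQ : D.mul a (D.mul a a) = (D.tr (D.mul a a) / 2) • a)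
    (hbQ : D.mul b (D.mul a a) = (D.tr (D.mul a a) / 2) • b)
    (hQQ : D.mul (D.mul a a) (D.mul a a) = (D.tr (D.mul a a) / 2) • D.mul a a)
    (hp : 0 < D.tr (D.mul a a)) (hb0 : b ≠ 0) :
    ∃ X Y : J, D.mul X X = X ∧ D.tr X = 1 ∧ D.mul X Y = (1 / 2 : ℝ) • Y ∧
      Y ≠ 0 ∧ D.sigmaX (a, b) = (X, 0) ∧ D.sigmaY (a, b) = (Y, 0) ∧ D.tau X Y = (a, b) := by
  set Q := D.mul a a
  set p := D.tr Q
  set N := D.normC (a, b)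
  have hN_def : N = √(2 * p) := D.normC_mk_of_mul_self_eq hsq
  have hN : 0 < N := by rw [hN_def]; positivity
  have hNp : p = N ^ 2 / 2 := by
    rw [hN_def, Real.sq_sqrt (by positivity)]
    ring
  set k := 2 / (√2 * √N)
  have hk : k * k = 2 / N := by
    rw [div_mul_div_comm, mul_mul_mul_comm, Real.mul_self_sqrt zero_le_two,
      Real.mul_self_sqrt hN.le]
    field_simp
  have hX : (1 / N) • a + (1 / N ^ 2) • (Q + D.mul b b) = (1 / N) • a + (2 / N ^ 2) • Q := by
    rw [← hsq]
    module
  refine ⟨_, k • b, ?_, ?_, ?_, smul_ne_zero (by positivity) hb0, D.sigmaX_mk a b,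
    D.sigmaY_mk a b, ?_⟩ <;> rw [hX]
  · simp only [map_add, map_smul, LinearMap.add_apply, LinearMap.smul_apply, haQ, hQQ,
      D.comm Q a]
    rw [hNp]
    match_scalars <;> field_simp <;> ring
  · simp only [map_add, map_smul, smul_eq_mul, hta]
    change 1 / N * 0 + 2 / N ^ 2 * p = 1
    rw [hNp, mul_zero, zero_add]
    field_simp
  · simp only [map_add, map_smul, LinearMap.add_apply, LinearMap.smul_apply, hab, D.comm Q b,
      hbQ]
    rw [hNp]
    match_scalars
    field_simp
  · have hYY : D.mul (k • b) (k • b) = (2 / N) • Q := by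
      simp only [map_smul, LinearMap.smul_apply, smul_smul, hk, ← hsq]
    have hYnorm : D.inner (k • b) (k • b) = N := by
      rw [inner, hYY, map_smul, smul_eq_mul]
      change 2 / N * p = N
      rw [hNp]
      field_simp
    have hscale : √N / √2 * k = 1 := by
      simp only [k]
      field_simp
      exact (Real.sq_sqrt zero_le_two).symm
    rw [tau, hYnorm, hYY, smul_smul, hscale, one_smul]
    ext
    · match_scalars <;> field_simp
      ring
    · rfl

theorem sigma_spec (hCH : D.CayleyHamilton) (hAdj : D.AdjointIdentity)
    (hCHC : D.CayleyHamiltonC) (hpos : ∀ x : J, x ≠ 0 → 0 < D.inner x x) {A : J × J}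
    (hA : D.mulC A A = 0) (hA0 : A ≠ 0) :
    ∃ X Y : J, D.mul X X = X ∧ D.tr X = 1 ∧ D.mul X Y = (1 / 2 : ℝ) • Y ∧
      Y ≠ 0 ∧ D.sigmaX A = (X, 0) ∧ D.sigmaY A = (Y, 0) ∧ D.tau X Y = A := by
  obtain ⟨a, b⟩ := A
  obtain ⟨hsq, hab⟩ := D.mulC_self_eq_zero_iff.mp hA
  have hba : D.mul b a = 0 := by rw [D.comm, hab]
  obtain ⟨hta, htb⟩ := Complex.ext_iff.mp (D.trC_eq_zero_of_mulC_self_eq_zero hCHC hA)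
  change D.tr a = 0 at hta
  change D.tr b = 0 at htb
  have haQ : D.mul a (D.mul a a) = (D.tr (D.mul a a) / 2) • a := by
    refine D.cube_of_tr_eq_zero hCH hta ?_
    rw [hsq, ← D.assoc, hab, map_zero, LinearMap.zero_apply, map_zero]
  have hbQ : D.mul b (D.mul a a) = (D.tr (D.mul a a) / 2) • b := by
    rw [hsq]
    refine D.cube_of_tr_eq_zero hCH htb ?_
    rw [← hsq, ← D.assoc, hba, map_zero, LinearMap.zero_apply, map_zero]
  have ha0 : a ≠ 0 := by
    rintro rfl
    refine hA0 (Prod.ext rfl (by_contra fun hb => ?_))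
    have := hpos b hb
    simp [inner, ← hsq] at this
  have hb0 : b ≠ 0 := by
    rintro rfl
    simpa [inner, hsq] using hpos a ha0
  exact sigma_spec_of_mul_relations hsq hab hta haQ hbQ
    (D.sq_mul_sq_of_cube hAdj hta haQ) (hpos a ha0) hb0

end

end JordanData

/-- The map `τ(X,Y) = (‖Y‖²X − Y∘Y)⊗1 + (1/√2)‖Y‖Y⊗√−1` is a bijection from
the punctured tangent bundle `{(X,Y) : X∘X = X, tr X = 1, X∘Y = ½Y, Y ≠ 0}`
onto `{A ∈ J^ℂ : A∘A = 0, A ≠ 0}`, with inverse `σ(A) = (X,Y)`,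
`X = (1/(2‖A‖))(A+Ā) + (A∘Ā)/‖A‖²`, `Y = −(√−1/√2)‖A‖^{−1/2}(A−Ā)`. -/
theorem stmt12 {J : Type} [AddCommGroup J] [Module ℝ J] (D : JordanData J)
    (hCH : D.CayleyHamilton) (hAdj : D.AdjointIdentity)
    (hCHC : D.CayleyHamiltonC)
    (hpos : ∀ x : J, x ≠ 0 → 0 < D.inner x x) :
    (∀ X Y : J, D.mul X X = X → D.tr X = 1 → D.mul X Y = (1 / 2 : ℝ) • Y →
        Y ≠ 0 →
      D.mulC (D.tau X Y) (D.tau X Y) = 0 ∧ D.tau X Y ≠ 0 ∧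
        D.sigmaX (D.tau X Y) = (X, 0) ∧ D.sigmaY (D.tau X Y) = (Y, 0)) ∧
    (∀ A : J × J, D.mulC A A = 0 → A ≠ 0 →
      ∃ X Y : J, D.mul X X = X ∧ D.tr X = 1 ∧ D.mul X Y = (1 / 2 : ℝ) • Y ∧
        Y ≠ 0 ∧ D.sigmaX A = (X, 0) ∧ D.sigmaY A = (Y, 0) ∧ D.tau X Y = A) :=
  ⟨fun _ _ hX hXtr hXY hY => JordanData.tau_spec hCH hAdj hpos hX hXtr hXY hY,
    fun _ hA hA0 => JordanData.sigma_spec hCH hAdj hCHC hpos hA hA0⟩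
end

section
/- Under the identification τ, the flow φ_t(A) = e^{−2√−1 t}A on {A ∈ J^ℂ : A∘A = 0, A ≠ 0} corresponds to the curve t ↦ (γ(t), γ'(t)-data) where for ‖Y‖_P = 1 the point component is γ(t) = cos(2t)·(X − ½Y∘Y) + ½sin(2t)·Y + ½Y∘Y; in particular γ(t) satisfies γ(t)∘γ(t) = γ(t) and tr γ(t) = 1 for all t. -/
section
variable {J : Type} [AddCommGroup J] [Module ℝ J]

lemma cross_add_smul (D : JordanData J) (r : ℝ) (x y : J) :
    D.cross (x + r • y) (x + r • y)
      = D.cross x x + (2*r) • D.cross x y + (r*r) • D.cross y y := by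
  have hc : D.mul y x = D.mul x y := D.comm y x
  simp only [JordanData.cross, map_add, map_smul, LinearMap.add_apply,
    LinearMap.smul_apply, smul_eq_mul, hc]
  module

end

set_option maxHeartbeats 1000000 in
/-- Under `τ`, the flow `φ_t(A) = e^{−2√−1 t}A` on `{A∘A = 0, A ≠ 0}`
corresponds to the geodesic `γ(t) = cos 2t·(X − ½Y∘Y) + ½ sin 2t·Y + ½Y∘Y`
(with velocity `γ'(t)`); in particular `γ(t)∘γ(t) = γ(t)` and `tr γ(t) = 1`
for all `t`. -/
theorem stmt13 {J : Type} [AddCommGroup J] [Module ℝ J] (D : JordanData J)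
    (hCH : D.CayleyHamilton) (hAdj : D.AdjointIdentity)
    (hpos : ∀ x : J, x ≠ 0 → 0 < D.inner x x)
    (X Y : J) (hX : D.mul X X = X) (htrX : D.tr X = 1)
    (hXY : D.mul X Y = (1 / 2 : ℝ) • Y) (hYn : D.inner Y Y = 2)
    (gam : ℝ → J)
    (hgam : ∀ t, gam t = Real.cos (2 * t) • (X - (1 / 2 : ℝ) • D.mul Y Y)
      + ((1 / 2 : ℝ) * Real.sin (2 * t)) • Y + (1 / 2 : ℝ) • D.mul Y Y)
    (vel : ℝ → J)
    (hvel : ∀ t, vel t = (-(2 * Real.sin (2 * t))) • (X - (1 / 2 : ℝ) • D.mul Y Y)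
      + Real.cos (2 * t) • Y) :
    ∀ t : ℝ,
      JordanData.smulC (Complex.exp (-(2 * t) * Complex.I)) (D.tau X Y)
          = D.tau (gam t) (vel t) ∧
      D.mul (gam t) (gam t) = gam t ∧ D.tr (gam t) = 1 := by
  have hYX : D.mul Y X = (1/2 : ℝ) • Y := by rw [D.comm]; exact hXY
  have hXE : D.mul X D.E = X := by rw [D.comm]; exact D.one_mul X
  have hYE : D.mul Y D.E = Y := by rw [D.comm]; exact D.one_mul Y
  have htrZ : D.tr (D.mul Y Y) = 2 := hYn
  have htrXY : D.tr (D.mul X Y) = (1/2) * D.tr Y := by rw [hXY]; simp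
  have htrXZ : D.tr (D.mul X (D.mul Y Y)) = 1 := by
    have h := D.assoc X Y Y
    rw [hXY, map_smul] at h
    rw [← h]; simp [htrZ]
  have hcXX : D.cross X X = 0 := by
    simp only [JordanData.cross, hX, htrX, map_smul, smul_eq_mul]
    module
  have hcXY : D.cross X Y = (D.tr Y / 4) • D.E - (D.tr Y / 2) • X := by
    simp only [JordanData.cross, hXY, htrX, htrXY, map_smul, smul_eq_mul]
    module
  have hcYY : D.cross Y Y
      = D.mul Y Y - D.tr Y • Y + ((D.tr Y * D.tr Y - 2)/2) • D.E := by
    simp only [JordanData.cross, htrZ]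
    module
  -- generic Cayley–Hamilton instance
  have hgen : ∀ r : ℝ,
      (r * (-(D.tr Y)/2) + r^2 * ((D.tr Y * D.tr Y - 2)/2)) • X
        + (r^2 : ℝ) • D.mul X (D.mul Y Y)
        + (r^2 * (-(D.tr Y)/2) + r^3 * ((D.tr Y * D.tr Y - 2)/2)) • Y
        + (r^3 : ℝ) • D.mul Y (D.mul Y Y)
        + (r^3 * (-(D.tr Y))) • D.mul Y Y
      = ((1/3) * (-(D.tr Y)/2 * r
          + (D.tr (D.mul Y (D.mul Y Y)) - 3 * D.tr Y + (D.tr Y)^3/2) * r^3)) • D.E := by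
    intro r
    have h := hCH (X + r • Y)
    rw [JordanData.det, cross_add_smul] at h
    simp only [map_add, map_smul, LinearMap.add_apply, LinearMap.smul_apply,
      hcXX, hcXY, hcYY, map_sub, map_zero, smul_zero, zero_add,
      smul_sub, smul_add, hX, hXY, hYX, hXE, hYE,
      htrX, htrXY, htrXZ, htrZ, D.trE, smul_eq_mul] at h
    linear_combination (norm := module) h
  have e1 := hgen 1
  have e2 := hgen (-1)
  have e3 := hgen 2
  have hYne : Y ≠ 0 := by
    intro h
    rw [h] at hYn
    simp [JordanData.inner] at hYn
  have hA : (-(D.tr Y)/2) • X + (D.tr Y / 6) • D.E = 0 := by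
    linear_combination (norm := module) e1 - (1/3 : ℝ) • e2 - (1/6 : ℝ) • e3
  have htrY : D.tr Y = 0 := by
    by_contra ha
    have hXe : X = (1/3 : ℝ) • D.E := by
      have h2 : (D.tr Y) • ((1/3 : ℝ) • D.E - X) = 0 := by
        linear_combination (norm := module) (2 : ℝ) • hA
      rcases smul_eq_zero.mp h2 with h | h
      · exact absurd h ha
      · linear_combination (norm := module) -h
    have : (1/3 : ℝ) • Y = (1/2 : ℝ) • Y := by
      rw [← hXY, hXe]
      simp only [map_smul, LinearMap.smul_apply, D.one_mul]
    have hY0 : Y = 0 := by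
      have : ((1/3 : ℝ) - (1/2 : ℝ)) • Y = 0 := by
        rw [sub_smul, this, sub_self]
      rcases smul_eq_zero.mp this with h | h
      · norm_num at h
      · exact h
    exact hYne hY0
  have hB : D.mul X (D.mul Y Y) + (-(D.tr Y)/2) • Y
      + ((D.tr Y * D.tr Y - 2)/2) • X = 0 := by
    linear_combination (norm := module) (1/2 : ℝ) • e1 + (1/2 : ℝ) • e2
  rw [htrY] at hB
  have hXZ : D.mul X (D.mul Y Y) = X := by
    linear_combination (norm := module) hB
  have hC : D.mul Y (D.mul Y Y) + (-(D.tr Y)) • D.mul Y Y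
      + ((D.tr Y * D.tr Y - 2)/2) • Y
      - ((1/3) * (D.tr (D.mul Y (D.mul Y Y)) - 3 * D.tr Y + (D.tr Y)^3/2)) • D.E
      = 0 := by
    linear_combination (norm := module) (1/6 : ℝ) • e3 - (1/2 : ℝ) • e1 - (1/6 : ℝ) • e2
  rw [htrY] at hC
  have htrXYZ : D.tr (D.mul X (D.mul Y (D.mul Y Y)))
      = (1/2) * D.tr (D.mul Y (D.mul Y Y)) := by
    have h := D.assoc X Y (D.mul Y Y)
    rw [hXY] at h
    simp only [map_smul, LinearMap.smul_apply, smul_eq_mul] at h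
    rw [← h]
  have htrYZ : D.tr (D.mul Y (D.mul Y Y)) = 0 := by
    have h := congrArg (fun w => D.tr (D.mul X w)) hC
    simp only [map_add, map_sub, map_smul, map_zero, smul_eq_mul,
      htrXYZ, htrXZ, hXE, htrX, htrXY, htrY] at h
    linarith
  have hYZ : D.mul Y (D.mul Y Y) = Y := by
    rw [htrYZ] at hC
    linear_combination (norm := module) hC
  have hcYY' : D.cross Y Y = D.mul Y Y - D.E := by
    rw [hcYY, htrY]; module
  have hdetY : D.det Y = 0 := by
    rw [JordanData.det, hcYY', map_sub, hYZ, hYE]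
    simp
  have hZE : D.mul (D.mul Y Y) D.E = D.mul Y Y := by rw [D.comm]; exact D.one_mul _
  have hadjY := hAdj Y
  rw [hcYY', hdetY, zero_smul] at hadjY
  simp only [JordanData.cross, map_sub, map_smul, LinearMap.sub_apply,
    hZE, D.one_mul, htrZ, D.trE, smul_eq_mul] at hadjY
  have htrZZ : D.tr (D.mul (D.mul Y Y) (D.mul Y Y)) = 2 := by
    have h := congrArg D.tr hadjY
    simp only [map_add, map_sub, map_smul, map_zero, smul_eq_mul, htrZ, D.trE] at h
    linarith
  rw [htrZZ] at hadjY
  have hZZ : D.mul (D.mul Y Y) (D.mul Y Y) = D.mul Y Y := by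
    linear_combination (norm := module) hadjY
  have hZX : D.mul (D.mul Y Y) X = X := by rw [D.comm]; exact hXZ
  have hZY : D.mul (D.mul Y Y) Y = Y := by rw [D.comm]; exact hYZ
  intro t
  have hmul : D.mul (gam t) (gam t) = gam t := by
    rw [hgam]
    simp only [map_add, map_sub, map_smul, LinearMap.add_apply, LinearMap.sub_apply,
      LinearMap.smul_apply, hX, hXY, hYX, hXZ, hYZ, hZX, hZY, hZZ]
    set c := Real.cos (2*t) with hcdef
    set s := Real.sin (2*t) with hsdef
    have hpyth : s^2 + c^2 = 1 := Real.sin_sq_add_cos_sq _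
    match_scalars <;> first
      | ring1
      | linear_combination hpyth
      | linear_combination -hpyth
      | linear_combination (1/4:ℝ) * hpyth
      | linear_combination (-1/4:ℝ) * hpyth
      | linear_combination (1/2:ℝ) * hpyth
      | linear_combination (-1/2:ℝ) * hpyth
      | linear_combination (2:ℝ) * hpyth
      | linear_combination (-2:ℝ) * hpyth
      | linear_combination (4:ℝ) * hpyth
      | linear_combination (-4:ℝ) * hpyth
      | linear_combination c * hpyth
      | linear_combination (-c) * hpyth
      | linear_combination (c/2) * hpyth
      | linear_combination (-c/2) * hpyth
      | linear_combination (c/4) * hpyth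
      | linear_combination (-c/4) * hpyth
      | linear_combination s * hpyth
      | linear_combination (-s) * hpyth
  have htrgam : D.tr (gam t) = 1 := by
    rw [hgam]
    simp only [map_add, map_sub, map_smul, smul_eq_mul, htrX, htrY, htrZ]
    ring
  have hvel2 : D.mul (vel t) (vel t) = D.mul Y Y := by
    rw [hvel]
    simp only [map_add, map_sub, map_smul, LinearMap.add_apply, LinearMap.sub_apply,
      LinearMap.smul_apply, hX, hXY, hYX, hXZ, hYZ, hZX, hZY, hZZ]
    set c := Real.cos (2*t) with hcdef
    set s := Real.sin (2*t) with hsdef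
    have hpyth : s^2 + c^2 = 1 := Real.sin_sq_add_cos_sq _
    match_scalars <;> first
      | ring1
      | linear_combination hpyth
      | linear_combination -hpyth
      | linear_combination (1/4:ℝ) * hpyth
      | linear_combination (-1/4:ℝ) * hpyth
      | linear_combination (1/2:ℝ) * hpyth
      | linear_combination (-1/2:ℝ) * hpyth
      | linear_combination (2:ℝ) * hpyth
      | linear_combination (-2:ℝ) * hpyth
      | linear_combination (4:ℝ) * hpyth
      | linear_combination (-4:ℝ) * hpyth
      | linear_combination c * hpyth
      | linear_combination (-c) * hpyth
      | linear_combination (c/2) * hpyth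
      | linear_combination (-c/2) * hpyth
      | linear_combination (c/4) * hpyth
      | linear_combination (-c/4) * hpyth
      | linear_combination s * hpyth
      | linear_combination (-s) * hpyth
  have hvv : D.inner (vel t) (vel t) = 2 := by
    show D.tr (D.mul (vel t) (vel t)) = 2
    rw [hvel2]; exact htrZ
  refine ⟨?_, hmul, htrgam⟩
  have hzre : (Complex.exp (-(2 * (t:ℂ)) * Complex.I)).re = Real.cos (2*t) := by
    rw [Complex.exp_re]
    simp
  have hzim : (Complex.exp (-(2 * (t:ℂ)) * Complex.I)).im = -Real.sin (2*t) := by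
    rw [Complex.exp_im]
    simp
  have hsqrt2 : Real.sqrt 2 / Real.sqrt 2 = 1 := div_self (by positivity)
  simp only [JordanData.tau, JordanData.smulC, hYn, hvv, hsqrt2, one_smul,
    hzre, hzim]
  refine Prod.ext ?_ ?_
  · show _ = (2:ℝ) • gam t - D.mul (vel t) (vel t)
    rw [hvel2, hgam]
    match_scalars <;> ring
  · show _ = vel t
    rw [hvel]
    match_scalars <;> ring
end

section
/- For the map τ_S: T₀*Sⁿ → ℂ^{n+1}, τ_S(x,y) = ‖y‖x + √−1 y (where x ∈ Sⁿ ⊂ ℝ^{n+1}, y ⊥ x, y ≠ 0), the image equals {z ∈ ℂ^{n+1} : Σ z_j² = 0, z ≠ 0}, and τ_S is a diffeomorphism onto this image. -/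
open scoped ComplexConjugate

/-- The map `τ_S(x,y) = ‖y‖x + √−1 y` on the punctured cotangent bundle of the
sphere `Sⁿ ⊂ ℝ^{n+1}` (identified via the round metric with pairs `(x,y)` with
`‖x‖ = 1`, `⟨x,y⟩ = 0`, `y ≠ 0`). -/
noncomputable def tauS (n : ℕ) (p : EuclideanSpace ℝ (Fin (n + 1)) × EuclideanSpace ℝ (Fin (n + 1))) :
    Fin (n + 1) → ℂ :=
  fun j => (‖p.2‖ * p.1 j : ℝ) + (p.2 j : ℝ) * Complex.I

/-- Real part, as a continuous linear map into Euclidean space. -/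
noncomputable def reE (m : ℕ) : (Fin m → ℂ) →L[ℝ] EuclideanSpace ℝ (Fin m) :=
  (PiLp.continuousLinearEquiv 2 ℝ _).symm.toContinuousLinearMap.comp
    (ContinuousLinearMap.pi fun j => Complex.reCLM.comp (ContinuousLinearMap.proj j))

/-- Imaginary part, as a continuous linear map into Euclidean space. -/
noncomputable def imE (m : ℕ) : (Fin m → ℂ) →L[ℝ] EuclideanSpace ℝ (Fin m) :=
  (PiLp.continuousLinearEquiv 2 ℝ _).symm.toContinuousLinearMap.comp
    (ContinuousLinearMap.pi fun j => Complex.imCLM.comp (ContinuousLinearMap.proj j))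

lemma reE_apply (m : ℕ) (z : Fin m → ℂ) (j : Fin m) : reE m z j = (z j).re := rfl
lemma imE_apply (m : ℕ) (z : Fin m → ℂ) (j : Fin m) : imE m z j = (z j).im := rfl

lemma eucl_norm_sq (m : ℕ) (x : EuclideanSpace ℝ (Fin m)) : ‖x‖ ^ 2 = ∑ j, x j ^ 2 := by
  rw [EuclideanSpace.norm_eq, Real.sq_sqrt (by positivity)]
  simp [Real.norm_eq_abs, sq_abs]

lemma eucl_inner (m : ℕ) (x y : EuclideanSpace ℝ (Fin m)) :
    (inner ℝ x y : ℝ) = ∑ j, x j * y j := by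
  simp [PiLp.inner_apply, RCLike.inner_apply, mul_comm]

lemma quadric_iff (m : ℕ) (z : Fin m → ℂ) : (∑ j, (z j) ^ 2) = 0 ↔
    (∑ j, (z j).re ^ 2) = (∑ j, (z j).im ^ 2) ∧ (∑ j, (z j).re * (z j).im) = 0 := by
  have hre : (∑ j, (z j) ^ 2).re = ∑ j, ((z j).re ^ 2) - ∑ j, ((z j).im ^ 2) := by
    simp [pow_two, Complex.mul_re, Finset.sum_sub_distrib]
  have him : (∑ j, (z j) ^ 2).im = 2 * ∑ j, (z j).re * (z j).im := by
    rw [Finset.mul_sum]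
    simp [pow_two, Complex.mul_im, two_mul, mul_comm]
    exact Finset.sum_congr rfl fun j _ => by ring
  rw [Complex.ext_iff, hre, him]
  simp [sub_eq_zero]

/-- norms of real and imaginary parts agree on the quadric. -/
lemma quadric_norm_eq (m : ℕ) (z : Fin m → ℂ) (hq : (∑ j, (z j) ^ 2) = 0) :
    ‖reE m z‖ = ‖imE m z‖ := by
  have h := ((quadric_iff m z).1 hq).1
  have h1 : ‖reE m z‖ ^ 2 = ‖imE m z‖ ^ 2 := by
    rw [eucl_norm_sq, eucl_norm_sq]
    simpa [reE_apply, imE_apply] using h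
  rw [← Real.sqrt_sq (norm_nonneg (reE m z)), ← Real.sqrt_sq (norm_nonneg (imE m z)), h1]

lemma quadric_im_ne (m : ℕ) (z : Fin m → ℂ) (hq : (∑ j, (z j) ^ 2) = 0) (hz : z ≠ 0) :
    imE m z ≠ 0 := by
  intro h
  apply hz
  have hre : reE m z = 0 := by
    have := quadric_norm_eq m z hq
    rw [h, norm_zero, norm_eq_zero] at this
    exact this
  funext j
  have h1 : (z j).re = 0 := by
    have := congrArg (fun v => v j) hre; simpa [reE_apply] using this
  have h2 : (z j).im = 0 := by
    have := congrArg (fun v => v j) h; simpa [imE_apply] using this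
  simp [Complex.ext_iff, h1, h2]

/-- The inverse map. -/
noncomputable def sigmaS (n : ℕ) (z : Fin (n + 1) → ℂ) :
    EuclideanSpace ℝ (Fin (n + 1)) × EuclideanSpace ℝ (Fin (n + 1)) :=
  ((‖imE (n + 1) z‖)⁻¹ • reE (n + 1) z, imE (n + 1) z)

/-- `τ_S : T₀*Sⁿ → ℂ^{n+1}`, `τ_S(x,y) = ‖y‖x + √−1 y`, maps the punctured
cotangent bundle of the sphere bijectively onto the punctured null quadric
`{z ≠ 0 : Σ z_j² = 0}`, and is a diffeomorphism onto this image (it is smooth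
with a smooth inverse). -/
theorem stmt14 (n : ℕ) :
    Set.BijOn (tauS n)
      {p : EuclideanSpace ℝ (Fin (n + 1)) × EuclideanSpace ℝ (Fin (n + 1)) |
        ‖p.1‖ = 1 ∧ (inner ℝ p.1 p.2 : ℝ) = 0 ∧ p.2 ≠ 0}
      {z : Fin (n + 1) → ℂ | (∑ j, (z j) ^ 2) = 0 ∧ z ≠ 0} ∧
    ContDiffOn ℝ (⊤ : ℕ∞) (tauS n)
      {p : EuclideanSpace ℝ (Fin (n + 1)) × EuclideanSpace ℝ (Fin (n + 1)) |
        ‖p.1‖ = 1 ∧ (inner ℝ p.1 p.2 : ℝ) = 0 ∧ p.2 ≠ 0} ∧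
    ∃ σ : (Fin (n + 1) → ℂ) →
        EuclideanSpace ℝ (Fin (n + 1)) × EuclideanSpace ℝ (Fin (n + 1)),
      ContDiffOn ℝ (⊤ : ℕ∞) σ {z : Fin (n + 1) → ℂ | (∑ j, (z j) ^ 2) = 0 ∧ z ≠ 0} ∧
      Set.BijOn σ {z : Fin (n + 1) → ℂ | (∑ j, (z j) ^ 2) = 0 ∧ z ≠ 0}
        {p : EuclideanSpace ℝ (Fin (n + 1)) × EuclideanSpace ℝ (Fin (n + 1)) |
          ‖p.1‖ = 1 ∧ (inner ℝ p.1 p.2 : ℝ) = 0 ∧ p.2 ≠ 0} ∧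
      (∀ p, ‖p.1‖ = 1 → (inner ℝ p.1 p.2 : ℝ) = 0 → p.2 ≠ 0 →
        σ (tauS n p) = p) ∧
      (∀ z, (∑ j, (z j) ^ 2) = 0 → z ≠ 0 → tauS n (σ z) = z) := by
  set m := n + 1
  set S := {p : EuclideanSpace ℝ (Fin m) × EuclideanSpace ℝ (Fin m) |
    ‖p.1‖ = 1 ∧ (inner ℝ p.1 p.2 : ℝ) = 0 ∧ p.2 ≠ 0} with hS
  set Q := {z : Fin m → ℂ | (∑ j, (z j) ^ 2) = 0 ∧ z ≠ 0} with hQ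
  -- basic component formulas for tauS
  have tau_re : ∀ p j, ((tauS n p) j).re = ‖p.2‖ * p.1 j := by
    intro p j; simp [tauS]
  have tau_im : ∀ p j, ((tauS n p) j).im = p.2 j := by
    intro p j; simp [tauS]
  -- MapsTo tauS S Q
  have hmapsto : Set.MapsTo (tauS n) S Q := by
    rintro p ⟨hx, hxy, hy⟩
    constructor
    · rw [quadric_iff]
      constructor
      · have h1 : ∑ j, ((tauS n p) j).re ^ 2 = ‖p.2‖ ^ 2 * ∑ j, p.1 j ^ 2 := by
          rw [Finset.mul_sum]
          exact Finset.sum_congr rfl fun j _ => by rw [tau_re]; ring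
        have h2 : ∑ j, ((tauS n p) j).im ^ 2 = ∑ j, p.2 j ^ 2 := by
          exact Finset.sum_congr rfl fun j _ => by rw [tau_im]
        rw [h1, h2, ← eucl_norm_sq, ← eucl_norm_sq, hx]
        ring
      · have h3 : ∑ j, ((tauS n p) j).re * ((tauS n p) j).im
            = ‖p.2‖ * ∑ j, p.1 j * p.2 j := by
          rw [Finset.mul_sum]
          exact Finset.sum_congr rfl fun j _ => by rw [tau_re, tau_im]; ring
        rw [h3, ← eucl_inner, hxy, mul_zero]
    · intro h
      apply hy
      ext j
      have := congrFun h j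
      have him : p.2 j = (0:ℝ) := by
        have h2 := congrArg Complex.im this
        simpa [tau_im] using h2
      simpa using him
  -- left inverse
  have hleft : ∀ p ∈ S, sigmaS n (tauS n p) = p := by
    rintro p ⟨hx, hxy, hy⟩
    have him : imE m (tauS n p) = p.2 := by
      ext j; rw [imE_apply, tau_im]
    have hre : reE m (tauS n p) = ‖p.2‖ • p.1 := by
      ext j; rw [reE_apply, tau_re]; rfl
    have hny : ‖p.2‖ ≠ 0 := norm_ne_zero_iff.2 hy
    simp only [sigmaS, him, hre]
    refine Prod.ext ?_ him
    show ‖imE m (tauS n p)‖⁻¹ • reE m (tauS n p) = p.1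
    rw [him, hre, smul_smul, inv_mul_cancel₀ hny, one_smul]
  -- right inverse
  have hright : ∀ z ∈ Q, tauS n (sigmaS n z) = z := by
    rintro z ⟨hq, hz⟩
    have hni : imE m z ≠ 0 := quadric_im_ne m z hq hz
    have hnn : ‖imE m z‖ ≠ 0 := norm_ne_zero_iff.2 hni
    funext j
    show ((‖(sigmaS n z).2‖ * (sigmaS n z).1 j : ℝ) : ℂ) + ((sigmaS n z).2 j : ℝ) * Complex.I = z j
    have h1 : (sigmaS n z).2 = imE m z := rfl
    have h2 : (sigmaS n z).1 j = (‖imE m z‖)⁻¹ * (z j).re := by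
      show ((‖imE m z‖)⁻¹ • reE m z) j = _
      rw [PiLp.smul_apply, reE_apply]; rfl
    rw [h1, h2, imE_apply]
    rw [show ‖imE m z‖ * ((‖imE m z‖)⁻¹ * (z j).re) = (z j).re by field_simp]
    exact Complex.re_add_im (z j)
  -- MapsTo sigmaS Q S
  have hmapsto' : Set.MapsTo (sigmaS n) Q S := by
    rintro z ⟨hq, hz⟩
    have hni : imE m z ≠ 0 := quadric_im_ne m z hq hz
    have hnn : (0:ℝ) < ‖imE m z‖ := norm_pos_iff.2 hni
    refine ⟨?_, ?_, hni⟩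
    · show ‖(‖imE m z‖)⁻¹ • reE m z‖ = 1
      rw [norm_smul, Real.norm_eq_abs, abs_inv, abs_of_pos hnn,
        quadric_norm_eq m z hq, inv_mul_cancel₀ hnn.ne']
    · show (inner ℝ ((‖imE m z‖)⁻¹ • reE m z) (imE m z) : ℝ) = 0
      rw [real_inner_smul_left, eucl_inner]
      have := ((quadric_iff m z).1 hq).2
      have h4 : ∑ j, reE m z j * imE m z j = 0 := by
        simpa [reE_apply, imE_apply] using this
      rw [h4, mul_zero]
  -- BijOn tauS
  have hinj : Set.InjOn (tauS n) S := by
    intro a ha b hb h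
    rw [← hleft a ha, ← hleft b hb, h]
  have hsurj : Set.SurjOn (tauS n) S Q := by
    intro z hz
    exact ⟨sigmaS n z, hmapsto' hz, hright z hz⟩
  have hbij : Set.BijOn (tauS n) S Q := ⟨hmapsto, hinj, hsurj⟩
  have hinv' : Set.InvOn (tauS n) (sigmaS n) Q S := ⟨hright, hleft⟩
  refine ⟨hbij, ?_, sigmaS n, ?_, hinv'.bijOn hmapsto' hmapsto, ?_, ?_⟩
  · -- smoothness of tauS on S
    rw [contDiffOn_pi]
    intro j
    have hn2 : ContDiffOn ℝ (⊤ : ℕ∞) (fun p : EuclideanSpace ℝ (Fin m) × EuclideanSpace ℝ (Fin m) => ‖p.2‖) S := by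
      intro p hp
      exact ((contDiffAt_norm (𝕜 := ℝ) hp.2.2).comp p contDiffAt_snd).contDiffWithinAt
    have hx1 : ContDiff ℝ (⊤ : ℕ∞) (fun p : EuclideanSpace ℝ (Fin m) × EuclideanSpace ℝ (Fin m) => p.1 j) :=
      ContinuousLinearMap.contDiff (𝕜 := ℝ) (n := (⊤ : ℕ∞)) (f := (EuclideanSpace.proj j).comp (ContinuousLinearMap.fst ℝ (EuclideanSpace ℝ (Fin m)) (EuclideanSpace ℝ (Fin m))))
    have hy1 : ContDiff ℝ (⊤ : ℕ∞) (fun p : EuclideanSpace ℝ (Fin m) × EuclideanSpace ℝ (Fin m) => p.2 j) :=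
      ContinuousLinearMap.contDiff (𝕜 := ℝ) (n := (⊤ : ℕ∞)) (f := (EuclideanSpace.proj j).comp (ContinuousLinearMap.snd ℝ (EuclideanSpace ℝ (Fin m)) (EuclideanSpace ℝ (Fin m))))
    exact ((Complex.ofRealCLM.contDiff.comp_contDiffOn
        (hn2.mul hx1.contDiffOn))).add
      (((Complex.ofRealCLM.contDiff.comp hy1).mul contDiff_const).contDiffOn)
  · -- smoothness of sigmaS on Q
    refine ContDiffOn.prodMk ?_ (imE m).contDiff.contDiffOn
    have hinv2 : ContDiffOn ℝ (⊤ : ℕ∞) (fun z : Fin m → ℂ => (‖imE m z‖)⁻¹) Q := by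
      intro z hz
      have hni : imE m z ≠ 0 := quadric_im_ne m z hz.1 hz.2
      exact (((contDiffAt_norm (𝕜 := ℝ) hni).comp z
        (imE m).contDiff.contDiffAt).inv (norm_ne_zero_iff.2 hni)).contDiffWithinAt
    exact hinv2.smul (reE m).contDiff.contDiffOn
  · intro p h1 h2 h3; exact hleft p ⟨h1, h2, h3⟩
  · intro z h1 h2; exact hright z ⟨h1, h2⟩
end

section
/- For (X,Y) in the punctured tangent bundle of P²𝕆 (X∘X = X, tr X = 1, X∘Y = ½Y, Y ≠ 0), consider the pullback under τ(X,Y) = (‖Y‖²X − Y∘Y)⊗1 + (1/√2)‖Y‖Y⊗√−1 of the 1-form α = Re[(dA, Ā)/(4‖A‖^{3/2})]; then the imaginary part of (dτ(X,Y), τ(X,Y)‾) equals √2{‖Y‖³(dY,X) − ‖Y‖(dY,Y∘Y)}, and (dY, Y∘Y) = 0 along the bundle. -/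
/-- The key pullback computation for `τ*(√−2 ∂̄∂‖A‖^{1/2}) = ω`: at a point
`(X,Y)` of the punctured tangent bundle and for a tangent direction `(U,V)`,
writing `τ(X,Y) = a⊗1 + b⊗√−1` and `dτ(U,V) = da⊗1 + db⊗√−1`, the imaginary
part of `(dτ(X,Y)(U,V), conj τ(X,Y))`, namely `(db,a) − (da,b)`, equals
`√2{‖Y‖³(V,X) − ‖Y‖(V,Y∘Y)}`, and moreover `(V, Y∘Y) = 0`. -/
theorem stmt18 {J : Type} [AddCommGroup J] [Module ℝ J] (D : JordanData J)
    (hCH : D.CayleyHamilton) (hAdj : D.AdjointIdentity)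
    (X Y : J) (hX : D.mul X X = X) (htrX : D.tr X = 1)
    (hXY : D.mul X Y = (1 / 2 : ℝ) • Y) (hY0 : Y ≠ 0)
    (U V : J)
    (hU : (2 : ℝ) • D.mul X U = U) (htrU : D.tr U = 0)
    (hV : D.mul X V + D.mul U Y = (1 / 2 : ℝ) • V) :
    (D.inner
        ((1 / Real.sqrt 2) •
          ((D.inner Y V / Real.sqrt (D.inner Y Y)) • Y
            + Real.sqrt (D.inner Y Y) • V))
        (D.inner Y Y • X - D.mul Y Y)
      - D.inner
          ((2 * D.inner Y V) • X + D.inner Y Y • U - (2 : ℝ) • D.mul Y V)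
          ((Real.sqrt (D.inner Y Y) / Real.sqrt 2) • Y))
      = Real.sqrt 2 * ((Real.sqrt (D.inner Y Y)) ^ 3 * D.inner V X
          - Real.sqrt (D.inner Y Y) * D.inner V (D.mul Y Y)) ∧
    D.inner V (D.mul Y Y) = 0 := by
  -- basic facts
  have mulE : ∀ x : J, D.mul x D.E = x := fun x => by rw [D.comm, D.one_mul]
  have hXU : D.mul X U = (1/2 : ℝ) • U := by
    have h2 : D.mul X U = (1/2:ℝ) • ((2:ℝ) • D.mul X U) := by module
    rw [h2, hU]
  have trY : D.tr Y = 0 := by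
    have h := D.assoc X X Y
    rw [hX, hXY] at h
    simp only [map_smul, smul_eq_mul, hXY] at h
    linarith
  have trXY : D.tr (D.mul X Y) = 0 := by rw [hXY]; simp [trY]
  have trYX : D.tr (D.mul Y X) = 0 := by rw [D.comm]; exact trXY
  -- the cross products
  set N := D.tr (D.mul Y Y) with hN
  have CYY : D.cross Y Y = D.mul Y Y - (N / 2) • D.E := by
    rw [JordanData.cross, trY, ← hN]
    module
  have CXpY : D.cross (X+Y) (X+Y) = D.cross Y Y := by
    rw [JordanData.cross, JordanData.cross]
    simp only [map_add, LinearMap.add_apply, hX, hXY, D.comm Y X, htrX, trY, ← hN]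
    simp only [map_smul, smul_eq_mul, trXY, trY, htrX, map_add, ← hN]
    module
  have CXmY : D.cross (X-Y) (X-Y) = D.cross Y Y := by
    rw [JordanData.cross, JordanData.cross]
    simp only [map_sub, LinearMap.sub_apply, hX, hXY, D.comm Y X, htrX, trY, ← hN]
    simp only [map_smul, smul_eq_mul, trXY, trY, htrX, map_sub, ← hN]
    module
  have assocXYY := D.assoc X Y Y
  rw [hXY] at assocXYY
  simp only [map_smul, LinearMap.smul_apply, smul_eq_mul] at assocXYY
  -- assocXYY : 1/2 * N = D.tr (D.mul X (D.mul Y Y))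
  have trXC : D.tr (D.mul X (D.cross Y Y)) = 0 := by
    rw [CYY]
    simp only [map_sub, map_smul, mulE, smul_eq_mul]
    rw [← assocXYY, htrX]; ring
  -- Cayley-Hamilton at X+Y, X-Y gives X∘(Y×Y)=0
  have h1 := hCH (X+Y)
  have h2 := hCH (X-Y)
  rw [JordanData.det, CXpY] at h1
  rw [JordanData.det, CXmY] at h2
  simp only [map_add, map_sub, LinearMap.add_apply, LinearMap.sub_apply, trXC] at h1 h2
  -- h1 : mul X C + mul Y C = (1/3*(0 + b)) • E, h2 : mul X C - mul Y C = (1/3*(0-b)) • E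
  have hXC : D.mul X (D.cross Y Y) = 0 := by
    have h3 : (2:ℝ) • D.mul X (D.cross Y Y) =
        ((1/3) * (0 + D.tr (D.mul Y (D.cross Y Y)))) • D.E
        + ((1/3) * (0 - D.tr (D.mul Y (D.cross Y Y)))) • D.E := by
      rw [← h1, ← h2]; module
    have h4 : (2:ℝ) • D.mul X (D.cross Y Y) = 0 := by rw [h3]; module
    have := congrArg (fun z => (1/2:ℝ) • z) h4
    simpa using this
  have hXYY : D.mul X (D.mul Y Y) = (N/2) • X := by
    have h := hXC
    rw [CYY] at h
    simp only [map_sub, map_smul, mulE] at h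
    rw [sub_eq_zero] at h
    exact h
  -- det Y = 0
  have hb : D.tr (D.mul Y (D.cross Y Y)) = 0 := by
    have h := hCH Y
    rw [JordanData.det] at h
    have h4 := congrArg (fun z => D.tr (D.mul X z)) h
    simp only [map_smul, smul_eq_mul, mulE, htrX] at h4
    have h5 := D.assoc X Y (D.cross Y Y)
    rw [hXY] at h5
    simp only [map_smul, LinearMap.smul_apply, smul_eq_mul] at h5
    -- h5 : 1/2 * tr (mul Y C) = tr (mul X (mul Y C)); h4 : tr (mul X (mul Y C)) = 1/3 * tr(mul Y C) * 1
    rw [← h5] at h4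
    linarith
  have hYYY : D.mul Y (D.mul Y Y) = (N/2) • Y := by
    have h := hCH Y
    rw [JordanData.det, hb] at h
    rw [CYY] at h
    simp only [map_sub, map_smul, mulE] at h
    -- h : mul Y (mul Y Y) - (N/2) • Y = (1/3*0) • E
    rw [sub_eq_iff_eq_add] at h
    rw [h]; module
  have trYYY : D.tr (D.mul Y (D.mul Y Y)) = 0 := by
    rw [hYYY]; simp [trY]
  -- tangency consequence: tr(mul X V) = - tr(mul U Y)
  have hXVUY : D.tr (D.mul X V) = - D.tr (D.mul U Y) := by
    have h := congrArg (fun z => D.tr (D.mul X z)) hV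
    simp only [map_add, map_smul, smul_eq_mul] at h
    have e1 := D.assoc X X V
    rw [hX] at e1
    have e2 := D.assoc X U Y
    rw [hXU] at e2
    simp only [map_smul, LinearMap.smul_apply, smul_eq_mul] at e2
    rw [← e1, ← e2] at h
    linarith
  -- (V, Y∘Y) = 0
  have q0 : D.tr (D.mul V (D.mul Y Y)) = 0 := by
    have h := congrArg (fun z => D.tr (D.mul z (D.mul Y Y))) hV
    simp only [map_add, LinearMap.add_apply, map_smul, LinearMap.smul_apply, smul_eq_mul] at h
    have e1 : D.tr (D.mul (D.mul X V) (D.mul Y Y)) = (N/2) * D.tr (D.mul X V) := by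
      rw [D.comm X V, D.assoc V X (D.mul Y Y), hXYY]
      simp only [map_smul, smul_eq_mul]
    have e2 : D.tr (D.mul (D.mul U Y) (D.mul Y Y)) = (N/2) * D.tr (D.mul U Y) := by
      rw [D.assoc U Y (D.mul Y Y), hYYY]
      simp only [map_smul, smul_eq_mul]
    rw [e1, e2, hXVUY] at h
    linarith
  refine ⟨?_, q0⟩
  -- now the scalar computation
  have trMYVY : D.tr (D.mul (D.mul Y V) Y) = 0 := by
    rw [D.comm Y V, D.assoc V Y Y]
    exact q0
  have innNN : D.inner Y Y = N := rfl
  simp only [JordanData.inner, map_add, map_sub, map_smul, LinearMap.add_apply,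
    LinearMap.sub_apply, LinearMap.smul_apply, smul_eq_mul, innNN,
    trYX, trXY, trYYY, q0, trMYVY]
  have hVX : D.tr (D.mul V X) = D.tr (D.mul X V) := by rw [D.comm]
  rw [hVX, hXVUY]
  have hs2 : Real.sqrt 2 * Real.sqrt 2 = 2 := Real.mul_self_sqrt (by norm_num)
  have hs2ne : Real.sqrt 2 ≠ 0 := by positivity
  have hsN : Real.sqrt N * N = Real.sqrt N ^ 3 := by
    rcases le_or_gt 0 N with h | h
    · have hq := Real.sq_sqrt h
      linear_combination (-Real.sqrt N) * hq
    · rw [show Real.sqrt N = 0 from Real.sqrt_eq_zero'.mpr h.le]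
      ring
  field_simp
  rw [← hN]
  have hinv : Real.sqrt N ^ 2 * (Real.sqrt N)⁻¹ = Real.sqrt N := by
    rcases eq_or_ne (Real.sqrt N) 0 with h | h
    · rw [h]; simp
    · field_simp
  linear_combination (- D.tr (D.mul U Y) * Real.sqrt 2 ^ 2) * hsN
    + (-2 * N * D.tr (D.mul U Y)) * hinv + (N * Real.sqrt N * D.tr (D.mul U Y)) * hs2
end
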